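/- Rockafellar–Uryasev representation of CVaR: for every integrable real-valued random variable X on a probability space and every confidence level γ ∈ (0,1), CVaR_γ(X) = min_{α ∈ ℝ} ( α + (1/(1−γ)) · E[ max(−X − α, 0) ] ), and the minimum over α ∈ ℝ is attained. -/

import Mathlib

open MeasureTheory

/-- Value-at-risk of the return `X` at confidence level `β`:
`VaR_β(X) = inf {x ∈ ℝ : ℙ(x + X < 0) ≤ 1 - β}`. -/
noncomputable def VaR {Ω : Type*} [MeasurableSpace Ω] (P : Measure Ω) (X : Ω → ℝ) (β : ℝ) : ℝ :=
  sInf {x : ℝ | (P {ω | x + X ω < 0}).toReal ≤ 1 - β}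

/-- Conditional value-at-risk of the return `X` at confidence level `γ`:
`CVaR_γ(X) = (1/(1-γ)) ∫_γ^1 VaR_β(X) dβ`. -/
noncomputable def CVaR {Ω : Type*} [MeasurableSpace Ω] (P : Measure Ω) (X : Ω → ℝ) (γ : ℝ) : ℝ :=
  (1 / (1 - γ)) * ∫ β in γ..1, VaR P X β

/-!
Let `μ` be the law of the loss `-X` and `q` its lower quantile function, so that
`VaR_β(X) = q(β)`. The Galois connection `q(β) ≤ t ↔ β ≤ F_μ(t)` shows that `q` pushes Lebesgue
measure on `(0,1)` forward to `μ`, hence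
`E[(-X - α)⁺] = ∫₀¹ (q(β) - α)⁺ dβ ≥ ∫_γ¹ (q(β) - α) dβ = (1 - γ) (CVaR_γ(X) - α)`.
Since `q` is nondecreasing, for `α = q(γ)` the integrand `(q - α)⁺` vanishes on `(0, γ]` and
equals `q - α` on `(γ, 1)`, so both inequalities become equalities.
-/

open ProbabilityTheory Set Filter Topology

/-- The generalized inverse of the cdf. Only its values on `(0, 1)` are meaningful: outside,
the set is empty or unbounded below and `sInf` returns the junk value `0`. -/
noncomputable def lowerQuantile (μ : Measure ℝ) (β : ℝ) : ℝ := sInf {x | β ≤ cdf μ x}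

section Quantile

variable {μ : Measure ℝ} {β : ℝ}

lemma bddBelow_setOf_le_cdf (hβ : 0 < β) : BddBelow {x | β ≤ cdf μ x} := by
  obtain ⟨x₀, hx₀⟩ := eventually_atBot.1 ((tendsto_order.1 (tendsto_cdf_atBot μ)).2 β hβ)
  refine ⟨x₀, fun x hx => ?_⟩
  by_contra! hlt
  exact (hx₀ x hlt.le).not_ge hx

lemma nonempty_setOf_le_cdf (hβ : β < 1) : {x | β ≤ cdf μ x}.Nonempty :=
  ((tendsto_order.1 (tendsto_cdf_atTop μ)).1 β hβ).exists.imp fun _ => le_of_lt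

lemma lowerQuantile_le_iff (hβ : β ∈ Ioo 0 1) {t : ℝ} :
    lowerQuantile μ β ≤ t ↔ β ≤ cdf μ t := by
  refine ⟨fun h => ?_, fun h => csInf_le (bddBelow_setOf_le_cdf hβ.1) h⟩
  have hright : Tendsto (cdf μ) (𝓝[>] t) (𝓝 (cdf μ t)) :=
    continuousWithinAt_Ioi_iff_Ici.2 ((cdf μ).right_continuous t)
  refine ge_of_tendsto hright (eventually_nhdsWithin_of_forall fun x hx => ?_)
  obtain ⟨y, hy, hyx⟩ := exists_lt_of_csInf_lt (nonempty_setOf_le_cdf hβ.2) (h.trans_lt hx)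
  exact hy.trans (monotone_cdf μ hyx.le)

lemma monotoneOn_lowerQuantile : MonotoneOn (lowerQuantile μ) (Ioo 0 1) :=
  fun _ h₁ _ h₂ h => (lowerQuantile_le_iff h₁).2 <| h.trans ((lowerQuantile_le_iff h₂).1 le_rfl)

lemma aemeasurable_lowerQuantile : AEMeasurable (lowerQuantile μ) (volume.restrict (Ioo 0 1)) :=
  aemeasurable_restrict_of_monotoneOn measurableSet_Ioo monotoneOn_lowerQuantile

end Quantile

instance isProbabilityMeasure_volume_restrict_Ioo_zero_one :
    IsProbabilityMeasure (volume.restrict (Ioo (0 : ℝ) 1)) :=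
  ⟨by simp⟩

lemma volume_Ioo_inter_Iic {c : ℝ} (h1 : c ≤ 1) :
    volume (Ioo 0 1 ∩ Iic c) = ENNReal.ofReal c := by
  rw [measure_congr ((ae_eq_refl (Ioo (0 : ℝ) 1)).inter Iio_ae_eq_Iic.symm), Ioo_inter_Iio,
    min_eq_right h1, Real.volume_Ioo, sub_zero]

section QuantileTransform

variable {μ : Measure ℝ} [IsProbabilityMeasure μ] {γ : ℝ}

lemma map_lowerQuantile : (volume.restrict (Ioo 0 1)).map (lowerQuantile μ) = μ := by
  have := Measure.isProbabilityMeasure_map (aemeasurable_lowerQuantile (μ := μ))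
  refine Measure.eq_of_cdf _ _ (StieltjesFunction.ext fun t => ?_)
  have hpre : lowerQuantile μ ⁻¹' Iic t ∩ Ioo 0 1 = Ioo 0 1 ∩ Iic (cdf μ t) := by
    ext β
    simp only [mem_inter_iff, mem_preimage, mem_Iic]
    exact ⟨fun h => ⟨h.2, (lowerQuantile_le_iff h.2).1 h.1⟩,
      fun h => ⟨(lowerQuantile_le_iff h.1).2 h.2, h.1⟩⟩
  rw [cdf_eq_real, measureReal_def, Measure.map_apply_of_aemeasurable aemeasurable_lowerQuantile
    measurableSet_Iic, Measure.restrict_apply' measurableSet_Ioo, hpre,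
    volume_Ioo_inter_Iic (cdf_le_one μ t), ENNReal.toReal_ofReal (cdf_nonneg μ t)]

lemma integral_comp_lowerQuantile {f : ℝ → ℝ} (hf : AEStronglyMeasurable f μ) :
    ∫ β in Ioo 0 1, f (lowerQuantile μ β) = ∫ x, f x ∂μ := by
  conv_rhs => rw [← map_lowerQuantile (μ := μ)]
  exact (integral_map aemeasurable_lowerQuantile (by rwa [map_lowerQuantile])).symm

lemma integrableOn_lowerQuantile (hμ : Integrable id μ) :
    IntegrableOn (lowerQuantile μ) (Ioo 0 1) := by
  rwa [← map_lowerQuantile (μ := μ), integrable_map_measure aestronglyMeasurable_id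
    aemeasurable_lowerQuantile] at hμ

lemma setIntegral_lowerQuantile_sub_le (hμ : Integrable id μ) (hγ : γ ∈ Ioo 0 1) (α : ℝ) :
    ∫ β in Ioo γ 1, (lowerQuantile μ β - α) ≤ ∫ x, max (x - α) 0 ∂μ := by
  have hsub : Ioo γ 1 ⊆ Ioo 0 1 := Ioo_subset_Ioo_left hγ.1.le
  have hint : IntegrableOn (fun β => lowerQuantile μ β - α) (Ioo 0 1) :=
    (integrableOn_lowerQuantile hμ).sub (integrableOn_const measure_Ioo_lt_top.ne)
  calc ∫ β in Ioo γ 1, (lowerQuantile μ β - α)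
      ≤ ∫ β in Ioo γ 1, max (lowerQuantile μ β - α) 0 :=
        integral_mono (hint.mono_set hsub) (hint.mono_set hsub).pos_part fun _ => le_max_left _ _
    _ ≤ ∫ β in Ioo 0 1, max (lowerQuantile μ β - α) 0 :=
        setIntegral_mono_set hint.pos_part (Eventually.of_forall fun _ => le_max_right _ _)
          hsub.eventuallyLE
    _ = ∫ x, max (x - α) 0 ∂μ :=
        integral_comp_lowerQuantile (f := fun x => max (x - α) 0) (by fun_prop)

lemma setIntegral_lowerQuantile_sub_lowerQuantile (hγ : γ ∈ Ioo 0 1) :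
    ∫ β in Ioo γ 1, (lowerQuantile μ β - lowerQuantile μ γ)
      = ∫ x, max (x - lowerQuantile μ γ) 0 ∂μ := by
  calc ∫ β in Ioo γ 1, (lowerQuantile μ β - lowerQuantile μ γ)
      = ∫ β in Ioo γ 1, max (lowerQuantile μ β - lowerQuantile μ γ) 0 :=
        setIntegral_congr_fun measurableSet_Ioo fun β hβ => (max_eq_left (sub_nonneg.2 <|
          monotoneOn_lowerQuantile hγ ⟨hγ.1.trans hβ.1, hβ.2⟩ hβ.1.le)).symm
    _ = ∫ β in Ioo 0 1, max (lowerQuantile μ β - lowerQuantile μ γ) 0 := by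
        refine (setIntegral_eq_of_subset_of_forall_sdiff_eq_zero measurableSet_Ioo
          (Ioo_subset_Ioo_left hγ.1.le) fun β hβ => max_eq_right (sub_nonpos.2 ?_)).symm
        have hβγ : β ≤ γ := not_lt.1 fun h => hβ.2 ⟨h, hβ.1.2⟩
        exact monotoneOn_lowerQuantile hβ.1 hγ hβγ
    _ = ∫ x, max (x - lowerQuantile μ γ) 0 ∂μ :=
        integral_comp_lowerQuantile (f := fun x => max (x - lowerQuantile μ γ) 0) (by fun_prop)

lemma isLeast_lowerQuantile (hμ : Integrable id μ) (hγ : γ ∈ Ioo 0 1) :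
    IsLeast (range fun α : ℝ => α + (1 / (1 - γ)) * ∫ x, max (x - α) 0 ∂μ)
      ((1 / (1 - γ)) * ∫ β in Ioo γ 1, lowerQuantile μ β) := by
  set Q := ∫ β in Ioo γ 1, lowerQuantile μ β
  have hc : 0 < 1 - γ := sub_pos.2 hγ.2
  have hsplit : ∀ α, ∫ β in Ioo γ 1, (lowerQuantile μ β - α) = Q - (1 - γ) * α := fun α => by
    rw [integral_sub ((integrableOn_lowerQuantile hμ).mono_set (Ioo_subset_Ioo_left hγ.1.le))
      (integrableOn_const measure_Ioo_lt_top.ne), setIntegral_const,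
      Real.volume_real_Ioo_of_le hγ.2.le, smul_eq_mul]
  have hshift : ∀ α, 1 / (1 - γ) * Q = α + 1 / (1 - γ) * (Q - (1 - γ) * α) := fun α => by
    field_simp
    ring
  refine ⟨⟨lowerQuantile μ γ, ?_⟩, ?_⟩
  · rw [hshift (lowerQuantile μ γ), ← hsplit, setIntegral_lowerQuantile_sub_lowerQuantile hγ]
  · rintro _ ⟨α, rfl⟩
    dsimp only
    rw [hshift α, ← hsplit]
    have hle := setIntegral_lowerQuantile_sub_le hμ hγ α
    gcongr

end QuantileTransform

lemma VaR_eq_lowerQuantile_map_neg {Ω : Type*} [MeasurableSpace Ω] {P : Measure Ω}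
    [IsProbabilityMeasure P] {X : Ω → ℝ} (hX : AEMeasurable X P) :
    VaR P X = lowerQuantile (P.map (-X)) := by
  have := Measure.isProbabilityMeasure_map (μ := P) hX.neg
  ext β
  refine congrArg sInf (Set.ext fun x => ?_)
  have htail : (P {ω | x + X ω < 0}).toReal = (P.map (-X)).real (Iic x)ᶜ := by
    rw [compl_Iic, measureReal_def, Measure.map_apply_of_aemeasurable hX.neg measurableSet_Ioi]
    congr 2
    ext ω
    simp only [mem_ofPred_eq, mem_preimage, mem_Ioi, Pi.neg_apply]
    constructor <;> intro h <;> linarith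
  rw [mem_ofPred_eq, mem_ofPred_eq, htail, probReal_compl_eq_one_sub measurableSet_Iic,
    ← cdf_eq_real]
  constructor <;> intro h <;> linarith

/-- Rockafellar–Uryasev representation of CVaR:
`CVaR_γ(X) = min_{α ∈ ℝ} (α + (1/(1-γ)) · E[max(-X - α, 0)])`, the minimum being attained. -/
theorem CVaR_eq_min_RU {Ω : Type*} [MeasurableSpace Ω]
    (P : Measure Ω) [IsProbabilityMeasure P] (X : Ω → ℝ) (hX : Integrable X P)
    (γ : ℝ) (hγ : γ ∈ Set.Ioo (0 : ℝ) 1) :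
    IsLeast (Set.range fun α : ℝ => α + (1 / (1 - γ)) * ∫ ω, max (-X ω - α) 0 ∂P)
      (CVaR P X γ) := by
  have hL : AEMeasurable (-X) P := hX.aemeasurable.neg
  have := Measure.isProbabilityMeasure_map hL
  have hCVaR : CVaR P X γ = 1 / (1 - γ) * ∫ β in Ioo γ 1, lowerQuantile (P.map (-X)) β := by
    rw [CVaR, VaR_eq_lowerQuantile_map_neg hX.aemeasurable,
      intervalIntegral.integral_of_le hγ.2.le, integral_Ioc_eq_integral_Ioo]
  have hloss : ∀ α, ∫ ω, max (-X ω - α) 0 ∂P = ∫ x, max (x - α) 0 ∂P.map (-X) :=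
    fun α => (integral_map (f := fun x => max (x - α) 0) hL (by fun_prop)).symm
  simp only [hloss, hCVaR]
  exact isLeast_lowerQuantile ((integrable_map_measure aestronglyMeasurable_id hL).2 hX.neg) hγ
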